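/- arXiv:1806.06356 — 2 statements merged into one kernel-verified Lean document; each statement's English description precedes it below -/
import Mathlib

section
/- Let $M$ be a manifold and $X\subseteq M$ compact. The restriction map $\rho\colon \varinjlim_{U\supseteq X}[U:S^1] \to [X:S^1]$, from the direct limit over open neighborhoods $U$ of $X$ of homotopy classes of continuous maps $U\to S^1$, to homotopy classes of continuous maps $X\to S^1$, is a bijection. -/
/-!
Homotopy classes of maps `Y → S¹` are the orbits of `C(Y, S¹)` under multiplication by
`exp ∘ θ`, `θ : C(Y, ℝ)`: one inclusion is the straight-line homotopy in `θ`, the other is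
homotopy lifting along the covering `exp : ℝ → S¹`.

Surjectivity: extend `φ` by Tietze to `g : M → ℂ` and take `g / ‖g‖` on `{g ≠ 0} ⊇ X`.
Injectivity: write `ψ₀ = ψ₁ · exp θ` on `X` and extend `θ` to `Θ` by Tietze. Then
`D = ψ₀ / (ψ₁ · exp Θ)` is `1` on `X`, so on the neighbourhood `{D ≠ -1}` of `X` it equals
`exp (arg D)`, and there `ψ₀ = ψ₁ · exp (Θ + arg D)`.
-/

open Set

namespace Circle

lemma exp_pi : Circle.exp Real.pi = -1 := by
  ext; simp [coe_exp, Complex.exp_pi_mul_I]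

lemma coe_mem_slitPlane {z : Circle} (hz : z ≠ -1) : (z : ℂ) ∈ Complex.slitPlane := by
  refine Complex.mem_slitPlane_iff_arg.2 ⟨fun h ↦ hz ?_, z.coe_ne_zero⟩
  rw [← exp_arg z, h, exp_pi]

end Circle

namespace ContinuousMap

variable {Y : Type*} [TopologicalSpace Y]

theorem exists_eq_circleExp_of_ne_neg_one (f : C(Y, Circle)) (hf : ∀ y, f y ≠ -1) :
    ∃ θ : C(Y, ℝ), ∀ y, f y = Circle.exp (θ y) := by
  refine ⟨⟨fun y ↦ Complex.arg (f y), continuous_iff_continuousAt.2 fun y ↦ ?_⟩,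
    fun y ↦ (Circle.exp_arg _).symm⟩
  exact (Complex.continuousAt_arg (Circle.coe_mem_slitPlane (hf y))).comp
    (f := fun y ↦ (f y : ℂ)) (continuous_subtype_val.comp f.continuous).continuousAt

theorem homotopic_iff_exists_eq_mul_circleExp {f g : C(Y, Circle)} :
    f.Homotopic g ↔ ∃ θ : C(Y, ℝ), ∀ y, f y = g y * Circle.exp (θ y) := by
  constructor
  · rintro ⟨H⟩
    let K : C(unitInterval × Y, Circle) := H.toContinuousMap * (f.comp .snd)⁻¹
    have hK₀ (y : Y) : K (0, y) = Circle.exp ((0 : C(Y, ℝ)) y) := by simp [K]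
    let L := Circle.isCoveringMap_exp.liftHomotopy K 0 hK₀
    refine ⟨-(L.comp ((const Y 1).prodMk (.id Y))), fun y ↦ ?_⟩
    have hL : Circle.exp (L (1, y)) = g y * (f y)⁻¹ := by
      rw [← Function.comp_apply (f := Circle.exp),
        Circle.isCoveringMap_exp.liftHomotopy_lifts K 0 hK₀]
      simp [K]
    simp [hL]
  · rintro ⟨θ, hθ⟩
    exact ⟨{ toFun p := g p.2 * Circle.exp ((1 - p.1 : ℝ) * θ p.2)
             map_zero_left y := by simp [hθ]
             map_one_left y := by simp }⟩

end ContinuousMap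

section NormalSpace

variable {M : Type*} [TopologicalSpace M] [NormalSpace M] {X : Set M}

theorem exists_isOpen_circle_extension (hX : IsClosed X) (φ : C(X, Circle)) :
    ∃ (U : Set M) (_ : IsOpen U) (hXU : X ⊆ U) (ψ : C(U, Circle)),
      ψ.comp ⟨inclusion hXU, continuous_inclusion hXU⟩ = φ := by
  obtain ⟨g, hg⟩ := (ContinuousMap.mk ((↑) : Circle → ℂ) continuous_subtype_val).comp φ
    |>.exists_restrict_eq hX
  have hgX (x : X) : g x = φ x := congr($hg x)
  let U := {m | g m ≠ 0}
  have hg₀ (u : U) : ‖g u‖ ≠ 0 := norm_ne_zero_iff.2 u.2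
  let ψ : C(U, Circle) :=
    { toFun u := ⟨‖g u‖⁻¹ • g u, mem_sphere_zero_iff_norm.2 <| by
        rw [norm_smul, norm_inv, norm_norm, inv_mul_cancel₀ (hg₀ u)]⟩
      continuous_toFun := by
        have hgU : Continuous fun u : U ↦ g u := g.continuous.comp continuous_subtype_val
        exact ((hgU.norm.inv₀ hg₀).smul hgU).subtype_mk _ }
  refine ⟨U, isOpen_ne_fun g.continuous continuous_const, fun x hx ↦ ?_, ψ, ?_⟩
  · simp [U, hgX ⟨x, hx⟩]
  · ext x
    change ‖g x‖⁻¹ • g x = (φ x : ℂ)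
    rw [hgX x, Circle.norm_coe, inv_one, one_smul]

theorem exists_isOpen_homotopic_of_homotopic (hX : IsClosed X) {U : Set M} (hU : IsOpen U)
    (hXU : X ⊆ U) {ψ₀ ψ₁ : C(U, Circle)}
    (h : (ψ₀.comp ⟨inclusion hXU, continuous_inclusion hXU⟩).Homotopic
      (ψ₁.comp ⟨inclusion hXU, continuous_inclusion hXU⟩)) :
    ∃ (V : Set M) (_ : IsOpen V) (_ : X ⊆ V) (hVU : V ⊆ U),
      (ψ₀.comp ⟨inclusion hVU, continuous_inclusion hVU⟩).Homotopic
        (ψ₁.comp ⟨inclusion hVU, continuous_inclusion hVU⟩) := by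
  obtain ⟨θ, hθ⟩ := ContinuousMap.homotopic_iff_exists_eq_mul_circleExp.1 h
  obtain ⟨Θ, hΘ⟩ := θ.exists_restrict_eq hX
  let Θ' : C(U, ℝ) := Θ.comp ⟨(↑), continuous_subtype_val⟩
  let D : C(U, Circle) := ψ₀ * (ψ₁ * Circle.exp.comp Θ')⁻¹
  have hD (x : X) : D (inclusion hXU x) = 1 := mul_inv_eq_one.2 <| (hθ x).trans <| by
    rw [← hΘ]; rfl
  let V := Subtype.val '' {u : U | D u ≠ -1}
  have hVU : V ⊆ U := Subtype.coe_image_subset _ _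
  have hXV : X ⊆ V := fun x hx ↦ ⟨⟨x, hXU hx⟩, by
    change D (inclusion hXU ⟨x, hx⟩) ≠ -1
    rw [hD]
    exact (Circle.neg_ne_self 1).symm, rfl⟩
  let ι : C(V, U) := ⟨inclusion hVU, continuous_inclusion hVU⟩
  obtain ⟨η, hη⟩ := (D.comp ι).exists_eq_circleExp_of_ne_neg_one <| by
    rintro ⟨_, u, hu, rfl⟩
    exact hu
  refine ⟨V, hU.isOpenMap_subtype_val _ (isOpen_ne_fun D.continuous continuous_const), hXV, hVU,
    ContinuousMap.homotopic_iff_exists_eq_mul_circleExp.2 ⟨Θ'.comp ι + η, fun v ↦ ?_⟩⟩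
  refine (mul_inv_eq_iff_eq_mul.1 (hη v)).trans ?_
  change Circle.exp (η v) * (ψ₁ (inclusion hVU v) * Circle.exp (Θ v)) =
    ψ₁ (inclusion hVU v) * Circle.exp (Θ v + η v)
  rw [Circle.exp_add]
  ac_rfl

end NormalSpace

/-- For a compact subset `X` of a manifold (more generally a metric space) `M`,
the restriction map `ρ : colim_{U ⊇ X open} [U : S¹] → [X : S¹]` is a bijection.
Unfolded: (surjectivity) every continuous `φ : X → S¹` is, up to homotopy, the
restriction of a continuous circle-valued map on some open neighborhood of `X`;
(injectivity) if two circle-valued maps on an open neighborhood `U ⊇ X` are homotopic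
after restriction to `X`, then they are already homotopic after restriction to some
smaller open neighborhood `V` with `X ⊆ V ⊆ U` — i.e. they represent the same element
of the direct limit. -/
theorem germ_restriction_bijective {M : Type*} [MetricSpace M]
    (X : Set M) (hX : IsCompact X) :
    (∀ φ : C(X, Circle), ∃ (U : Set M) (hU : IsOpen U) (hXU : X ⊆ U)
        (ψ : C(U, Circle)),
        (ψ.comp ⟨Set.inclusion hXU, continuous_inclusion hXU⟩).Homotopic φ) ∧
    (∀ (U : Set M) (hU : IsOpen U) (hXU : X ⊆ U) (ψ₀ ψ₁ : C(U, Circle)),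
        (ψ₀.comp ⟨Set.inclusion hXU, continuous_inclusion hXU⟩).Homotopic
          (ψ₁.comp ⟨Set.inclusion hXU, continuous_inclusion hXU⟩) →
        ∃ (V : Set M) (hV : IsOpen V) (hXV : X ⊆ V) (hVU : V ⊆ U),
          (ψ₀.comp ⟨Set.inclusion hVU, continuous_inclusion hVU⟩).Homotopic
          (ψ₁.comp ⟨Set.inclusion hVU, continuous_inclusion hVU⟩)) :=
  ⟨fun φ ↦
    let ⟨U, hU, hXU, ψ, hψ⟩ := exists_isOpen_circle_extension hX.isClosed φ
    ⟨U, hU, hXU, ψ, hψ ▸ .refl _⟩,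
  fun _ hU hXU _ _ ↦ exists_isOpen_homotopic_of_homotopic hX.isClosed hU hXU⟩
end

section
/- Let $M$ be a manifold and $X_1,X_2,X_3\subseteq M$ compact sets with $X_1\cap X_2\cap X_3=\emptyset$, and let $X=X_1\cup X_2\cup X_3$. Let $\gamma_k = \{e^{i\theta} : \theta\in[2\pi(k-1)/3, 2\pi k/3]\}$ for $k=1,2,3$. Then there exists a continuous map $f\colon X\to S^1$ with $f(X_k)\subseteq\gamma_k$ for each $k$. -/
/-!
Take a partition of unity `ρ₁, ρ₂, ρ₃` subordinate to the open cover by the complements of the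
`Xₖ`, and send `x` to the point `ρ₂ x + ρ₃ x ω + ρ₁ x ω²` (with `ω = e^{2πi/3}`) of the triangle
with vertices `1, ω, ω²`. On `X₁` we have `ρ₁ = 0` and `ρ₂ + ρ₃ = 1`, so the point lies on the
edge from `1` to `ω`, away from the origin; similarly `X₂` and `X₃` land on the other two edges.
Radial projection maps the three edges onto the arcs `γ₁, γ₂, γ₃`.
-/

open Real

/-- The closed arc `{e^{iθ} : θ ∈ [a,b]}` of the unit circle. -/
def circleArc (a b : ℝ) : Set ℂ :=
  {z : ℂ | ∃ θ ∈ Set.Icc a b, z = Complex.exp (θ * Complex.I)}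

open Complex Set

def arcCone (a b : ℝ) : Set ℂ :=
  {z | ∃ r : ℝ, 0 < r ∧ ∃ θ ∈ Icc a b, z = r * exp (θ * I)}

section arcCone

variable {a b : ℝ} {z : ℂ}

lemma ne_zero_of_mem_arcCone (hz : z ∈ arcCone a b) : z ≠ 0 := by
  obtain ⟨r, hr, θ, -, rfl⟩ := hz
  exact mul_ne_zero (ofReal_ne_zero.2 hr.ne') (exp_ne_zero _)

lemma div_norm_mem_circleArc_of_mem_arcCone (hz : z ∈ arcCone a b) :
    z / ‖z‖ ∈ circleArc a b := by
  obtain ⟨r, hr, θ, hθ, rfl⟩ := hz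
  refine ⟨θ, hθ, ?_⟩
  rw [norm_mul, norm_exp_ofReal_mul_I, mul_one, norm_real, Real.norm_of_nonneg hr.le,
    mul_div_cancel_left₀ _ (ofReal_ne_zero.2 hr.ne')]

lemma mem_arcCone_of_arg_mem_Icc (hz : z ≠ 0) (harg : arg z ∈ Icc a b) : z ∈ arcCone a b :=
  ⟨‖z‖, norm_pos_iff.2 hz, arg z, harg, (norm_mul_exp_arg_mul_I z).symm⟩

lemma exp_mul_mem_arcCone (hz : z ∈ arcCone a b) (c : ℝ) :
    exp (c * I) * z ∈ arcCone (a + c) (b + c) := by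
  obtain ⟨r, hr, θ, hθ, rfl⟩ := hz
  refine ⟨r, hr, θ + c, ⟨by linarith [hθ.1], by linarith [hθ.2]⟩, ?_⟩
  rw [mul_left_comm, ← Complex.exp_add]
  push_cast
  ring_nf

lemma ofReal_add_mul_exp_mem_arcCone {α s t : ℝ} (hα₀ : 0 < α) (hαπ : α < π) (hs : 0 ≤ s)
    (ht : 0 ≤ t) (hst : 0 < s + t) : (s : ℂ) + t * exp (α * I) ∈ arcCone 0 α := by
  set z : ℂ := s + t * exp (α * I)
  have hre : z.re = s + t * Real.cos α := by simp [z, exp_ofReal_mul_I_re]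
  have him : z.im = t * Real.sin α := by simp [z, exp_ofReal_mul_I_im]
  have hsin : 0 < Real.sin α := Real.sin_pos_of_pos_of_lt_pi hα₀ hαπ
  have hz : z ≠ 0 := by
    intro h0
    have ht0 : t = 0 := by simpa [h0, hsin.ne'] using him
    have hs0 : z.re = s := by rw [hre, ht0, zero_mul, add_zero]
    rw [h0, zero_re] at hs0
    linarith
  refine mem_arcCone_of_arg_mem_Icc hz ⟨arg_nonneg_iff.2 (by rw [him]; positivity), ?_⟩
  by_contra! hlt
  -- `Im (z e^{-iα}) = ‖z‖ sin (arg z - α)` equals `-s sin α ≤ 0`, against `0 < arg z - α < π`.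
  have hrot : ‖z‖ * Real.sin (arg z - α) = -s * Real.sin α := by
    rw [Real.sin_sub, mul_sub, ← mul_assoc, ← mul_assoc, norm_mul_sin_arg, norm_mul_cos_arg,
      hre, him]
    ring
  have hpos : 0 < ‖z‖ * Real.sin (arg z - α) :=
    mul_pos (norm_pos_iff.2 hz)
      (Real.sin_pos_of_pos_of_lt_pi (by linarith) (by linarith [arg_le_pi z]))
  nlinarith

end arcCone

noncomputable def cubeRootsCombination (a b c : ℝ) : ℂ :=
  a + b * exp (↑(2 * π / 3) * I) + c * exp (↑(4 * π / 3) * I)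

section cubeRootsCombination

variable {a b c : ℝ}

lemma two_pi_div_three_pos : 0 < 2 * π / 3 := by positivity

lemma two_pi_div_three_lt_pi : 2 * π / 3 < π := by linarith [Real.pi_pos]

lemma cubeRootsCombination_zero_right_mem_arcCone (ha : 0 ≤ a) (hb : 0 ≤ b) (hab : 0 < a + b) :
    cubeRootsCombination a b 0 ∈ arcCone 0 (2 * π / 3) := by
  simpa [cubeRootsCombination] using
    ofReal_add_mul_exp_mem_arcCone two_pi_div_three_pos two_pi_div_three_lt_pi ha hb hab

lemma cubeRootsCombination_zero_left_mem_arcCone (hb : 0 ≤ b) (hc : 0 ≤ c) (hbc : 0 < b + c) :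
    cubeRootsCombination 0 b c ∈ arcCone (2 * π / 3) (4 * π / 3) := by
  have h := exp_mul_mem_arcCone
    (ofReal_add_mul_exp_mem_arcCone two_pi_div_three_pos two_pi_div_three_lt_pi hb hc hbc)
    (2 * π / 3)
  rw [zero_add, show 2 * π / 3 + 2 * π / 3 = 4 * π / 3 by ring] at h
  have hω : exp (↑(4 * π / 3) * I) = exp (↑(2 * π / 3) * I) * exp (↑(2 * π / 3) * I) := by
    rw [← Complex.exp_add]
    push_cast
    ring_nf
  convert h using 1
  rw [cubeRootsCombination, ofReal_zero, hω]
  ring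

lemma cubeRootsCombination_zero_mid_mem_arcCone (ha : 0 ≤ a) (hc : 0 ≤ c) (hca : 0 < c + a) :
    cubeRootsCombination a 0 c ∈ arcCone (4 * π / 3) (2 * π) := by
  have h := exp_mul_mem_arcCone
    (ofReal_add_mul_exp_mem_arcCone two_pi_div_three_pos two_pi_div_three_lt_pi hc ha hca)
    (4 * π / 3)
  rw [zero_add, show 2 * π / 3 + 4 * π / 3 = 2 * π by ring] at h
  have hω : exp (↑(4 * π / 3) * I) * exp (↑(2 * π / 3) * I) = 1 := by
    rw [← Complex.exp_add, ← exp_two_pi_mul_I]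
    push_cast
    ring_nf
  convert h using 1
  rw [cubeRootsCombination, ofReal_zero]
  linear_combination (-a : ℂ) * hω

end cubeRootsCombination

section PartitionOfUnity

variable {X : Type*} [TopologicalSpace X]

lemma exists_partitionOfUnity_subordinate_compl [NormalSpace X] {A₁ A₂ A₃ : Set X}
    (h₁ : IsClosed A₁) (h₂ : IsClosed A₂) (h₃ : IsClosed A₃) (h : A₁ ∩ A₂ ∩ A₃ = ∅) :
    ∃ ρ : PartitionOfUnity (Fin 3) X univ, ρ.IsSubordinate ![A₁ᶜ, A₂ᶜ, A₃ᶜ] := by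
  refine PartitionOfUnity.exists_isSubordinate_of_locallyFinite isClosed_univ _
    (fun i => ?_) (locallyFinite_of_finite _) fun x _ => ?_
  · fin_cases i <;> simpa
  · by_contra hx
    simp only [mem_iUnion, not_exists] at hx
    exact (eq_empty_iff_forall_notMem.1 h) x
      ⟨⟨by simpa using hx 0, by simpa using hx 1⟩, by simpa using hx 2⟩

lemma PartitionOfUnity.sum_fin_three (ρ : PartitionOfUnity (Fin 3) X univ) (x : X) :
    ρ 0 x + ρ 1 x + ρ 2 x = 1 := by
  rw [← Fin.sum_univ_three (ρ · x), ← finsum_eq_sum_of_fintype, ρ.sum_eq_one (mem_univ x)]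

lemma PartitionOfUnity.IsSubordinate.apply_eq_zero {ι : Type*} {s : Set X}
    {ρ : PartitionOfUnity ι X s} {U : ι → Set X} (hρ : ρ.IsSubordinate U) {i : ι} {x : X}
    (hx : x ∉ U i) : ρ i x = 0 :=
  image_eq_zero_of_notMem_tsupport fun h => hx (hρ i h)

end PartitionOfUnity

lemma exists_continuous_circle_eq_div_norm {Y : Type*} [TopologicalSpace Y] {g : Y → ℂ}
    (hg : Continuous g) (h0 : ∀ y, g y ≠ 0) :
    ∃ f : Y → Circle, Continuous f ∧ ∀ y, (f y : ℂ) = g y / ‖g y‖ := by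
  refine ⟨fun y => ⟨g y / ‖g y‖, ?_⟩, ?_, fun y => rfl⟩
  · change _ ∈ Metric.sphere (0 : ℂ) 1
    rw [mem_sphere_zero_iff_norm, norm_div, norm_real, norm_norm,
      div_self (norm_ne_zero_iff.2 (h0 y))]
  · exact (hg.div (continuous_ofReal.comp (continuous_norm.comp hg)) fun y =>
      ofReal_ne_zero.2 (norm_ne_zero_iff.2 (h0 y))).subtype_mk _

/-- If `X₁, X₂, X₃` are compact subsets of a manifold (more generally a
metric space) `M` with `X₁ ∩ X₂ ∩ X₃ = ∅`, and `γₖ = {e^{iθ} : θ ∈ [2π(k-1)/3, 2πk/3]}`,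
then there is a continuous `f : X₁ ∪ X₂ ∪ X₃ → S¹` with `f(Xₖ) ⊆ γₖ` for each `k`. -/
theorem exists_circle_map_of_decomposition {M : Type*} [MetricSpace M]
    (X₁ X₂ X₃ : Set M) (h₁ : IsCompact X₁) (h₂ : IsCompact X₂) (h₃ : IsCompact X₃)
    (hint : X₁ ∩ X₂ ∩ X₃ = ∅) :
    ∃ f : ↥(X₁ ∪ X₂ ∪ X₃) → Circle, Continuous f ∧
      (∀ x : ↥(X₁ ∪ X₂ ∪ X₃), (x : M) ∈ X₁ → (f x : ℂ) ∈ circleArc 0 (2 * π / 3)) ∧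
      (∀ x : ↥(X₁ ∪ X₂ ∪ X₃), (x : M) ∈ X₂ → (f x : ℂ) ∈ circleArc (2 * π / 3) (4 * π / 3)) ∧
      (∀ x : ↥(X₁ ∪ X₂ ∪ X₃), (x : M) ∈ X₃ → (f x : ℂ) ∈ circleArc (4 * π / 3) (2 * π)) := by
  obtain ⟨ρ, hρ⟩ :=
    exists_partitionOfUnity_subordinate_compl h₁.isClosed h₂.isClosed h₃.isClosed hint
  let g (x : M) : ℂ := cubeRootsCombination (ρ 1 x) (ρ 2 x) (ρ 0 x)
  have hsum := ρ.sum_fin_three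
  have hg₁ : ∀ x ∈ X₁, g x ∈ arcCone 0 (2 * π / 3) := fun x hx => by
    have h0 : ρ 0 x = 0 := hρ.apply_eq_zero (i := 0) (by simpa using hx)
    simpa only [g, h0] using cubeRootsCombination_zero_right_mem_arcCone (ρ.nonneg 1 x)
      (ρ.nonneg 2 x) (by linarith [hsum x])
  have hg₂ : ∀ x ∈ X₂, g x ∈ arcCone (2 * π / 3) (4 * π / 3) := fun x hx => by
    have h0 : ρ 1 x = 0 := hρ.apply_eq_zero (i := 1) (by simpa using hx)
    simpa only [g, h0] using cubeRootsCombination_zero_left_mem_arcCone (ρ.nonneg 2 x)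
      (ρ.nonneg 0 x) (by linarith [hsum x])
  have hg₃ : ∀ x ∈ X₃, g x ∈ arcCone (4 * π / 3) (2 * π) := fun x hx => by
    have h0 : ρ 2 x = 0 := hρ.apply_eq_zero (i := 2) (by simpa using hx)
    simpa only [g, h0] using cubeRootsCombination_zero_mid_mem_arcCone (ρ.nonneg 1 x)
      (ρ.nonneg 0 x) (by linarith [hsum x])
  obtain ⟨f, hf, hfg⟩ := exists_continuous_circle_eq_div_norm
    (g := fun x : ↥(X₁ ∪ X₂ ∪ X₃) => g x) (by unfold g cubeRootsCombination; fun_prop)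
    fun x => by
      rcases x.2 with (hx | hx) | hx
      exacts [ne_zero_of_mem_arcCone (hg₁ _ hx), ne_zero_of_mem_arcCone (hg₂ _ hx),
        ne_zero_of_mem_arcCone (hg₃ _ hx)]
  refine ⟨f, hf, fun x hx => ?_, fun x hx => ?_, fun x hx => ?_⟩ <;> rw [hfg]
  exacts [div_norm_mem_circleArc_of_mem_arcCone (hg₁ x hx),
    div_norm_mem_circleArc_of_mem_arcCone (hg₂ x hx),
    div_norm_mem_circleArc_of_mem_arcCone (hg₃ x hx)]
end
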